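/- arXiv:2301.05994 — 4 statements merged into one kernel-verified Lean document; each statement's English description precedes it below -/
import Mathlib

section
/- Stability of MMJ distance under small perturbations (Theorem 1): if i, j, p, q ∈ Ω with MMJ(i,j|Ω) = δ, d(i,p) < δ, and d(j,q) < δ, then MMJ(p,q|Ω) = δ. -/
/-- The maximum jump (distance between consecutive points) along a list of points. -/
def maxJump {α : Type*} (d : α → α → ℝ) : List α → ℝ
  | a :: b :: l => max (d a b) (maxJump d (b :: l))
  | _ => 0

/-- `L` is a path from `i` to `j` all of whose points lie in `S`. -/
def IsPathIn {α : Type*} (S : Set α) (i j : α) (L : List α) : Prop :=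
  L.head? = some i ∧ L.getLast? = some j ∧ ∀ x ∈ L, x ∈ S

/-- Min-Max-Jump distance between `i` and `j` under the context `S`. -/
noncomputable def MMJ {α : Type*} (d : α → α → ℝ) (S : Set α) (i j : α) : ℝ :=
  sInf {m : ℝ | ∃ L : List α, IsPathIn S i j L ∧ maxJump d L = m}

lemma maxJump_cons {α : Type*} (d : α → α → ℝ) (a x : α) (L : List α)
    (h : L.head? = some x) : maxJump d (a :: L) = max (d a x) (maxJump d L) := by
  cases L with
  | nil => simp at h
  | cons b l =>
    simp at h; subst h; rfl

lemma maxJump_concat {α : Type*} (d : α → α → ℝ) (c b : α) :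
    ∀ L : List α, L.getLast? = some b →
      maxJump d (L ++ [c]) = max (maxJump d L) (d b c)
  | [], h => by simp at h
  | [a], h => by
      simp at h; subst h
      simp [maxJump, max_comm]
  | a :: x :: l, h => by
      have h' : (x :: l).getLast? = some b := by simpa using h
      have ih := maxJump_concat d c b (x :: l) h'
      show max (d a x) (maxJump d ((x :: l) ++ [c])) = max (max (d a x) (maxJump d (x :: l))) (d b c)
      rw [ih, max_assoc]

lemma maxJump_mem {α : Type*} (d : α → α → ℝ) (Ω : Set α) :
    ∀ L : List α, (∀ x ∈ L, x ∈ Ω) → maxJump d L ∈ insert (0:ℝ) (Set.image2 d Ω Ω)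
  | [], _ => by simp [maxJump]
  | [a], _ => by simp [maxJump]
  | a :: b :: l, h => by
      have ha : a ∈ Ω := h a (by simp)
      have hb : b ∈ Ω := h b (by simp)
      have ih := maxJump_mem d Ω (b :: l) (fun x hx => h x (by simp [hx]))
      show max (d a b) (maxJump d (b :: l)) ∈ _
      rcases le_total (d a b) (maxJump d (b :: l)) with hle | hle
      · rwa [max_eq_right hle]
      · rw [max_eq_left hle]
        exact Set.mem_insert_of_mem _ (Set.mem_image2_of_mem ha hb)

theorem mmj_stability {α : Type*} [MetricSpace α] (Ω : Set α) (hfin : Ω.Finite)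
    (i j p q : α) (hi : i ∈ Ω) (hj : j ∈ Ω) (hp : p ∈ Ω) (hq : q ∈ Ω) (δ : ℝ)
    (hij : MMJ dist Ω i j = δ) (hip : dist i p < δ) (hjq : dist j q < δ) :
    MMJ dist Ω p q = δ := by
  set Vij := {m : ℝ | ∃ L : List α, IsPathIn Ω i j L ∧ maxJump dist L = m} with hVij
  set Vpq := {m : ℝ | ∃ L : List α, IsPathIn Ω p q L ∧ maxJump dist L = m} with hVpq
  have hsub : ∀ (a b : α), {m : ℝ | ∃ L : List α, IsPathIn Ω a b L ∧ maxJump dist L = m}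
      ⊆ insert (0:ℝ) (Set.image2 dist Ω Ω) := by
    rintro a b m ⟨L, ⟨_, _, hmem⟩, rfl⟩
    exact maxJump_mem dist Ω L hmem
  have hbig : (insert (0:ℝ) (Set.image2 dist Ω Ω)).Finite :=
    (hfin.image2 dist hfin).insert 0
  have hfinij : Vij.Finite := hbig.subset (hsub i j)
  have hfinpq : Vpq.Finite := hbig.subset (hsub p q)
  have hne : ∀ (a b : α), a ∈ Ω → b ∈ Ω →
      {m : ℝ | ∃ L : List α, IsPathIn Ω a b L ∧ maxJump dist L = m}.Nonempty := by
    intro a b ha hb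
    refine ⟨maxJump dist [a, b], [a, b], ⟨rfl, by simp, ?_⟩, rfl⟩
    intro x hx
    rcases List.mem_cons.mp hx with h | h
    · subst h; exact ha
    · rcases List.mem_cons.mp h with h | h
      · subst h; exact hb
      · simp at h
  have hneij : Vij.Nonempty := hne i j hi hj
  have hnepq : Vpq.Nonempty := hne p q hp hq
  -- the infima are attained
  have hmemij : MMJ dist Ω i j ∈ Vij := hneij.csInf_mem hfinij
  have hmempq : MMJ dist Ω p q ∈ Vpq := hnepq.csInf_mem hfinpq
  rw [hij] at hmemij
  obtain ⟨L, ⟨hLh, hLl, hLmem⟩, hLmax⟩ := hmemij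
  obtain ⟨L', ⟨hLh', hLl', hLmem'⟩, hLmax'⟩ := hmempq
  have hδ0 : (0:ℝ) < δ := lt_of_le_of_lt dist_nonneg hip
  -- upper bound : path p :: L ++ [q]
  have hheadLq : (L ++ [q]).head? = some i := by
    cases L with
    | nil => simp at hLh
    | cons a l => simp_all
  have hpath1 : IsPathIn Ω p q (p :: (L ++ [q])) := by
    refine ⟨rfl, ?_, ?_⟩
    · rw [List.getLast?_cons, List.getLast?_append]
      simp
    · intro x hx
      rcases List.mem_cons.mp hx with h | h
      · subst h; exact hp
      · rcases List.mem_append.mp h with h' | h'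
        · exact hLmem x h'
        · simp at h'; subst h'; exact hq
  have hmax1 : maxJump dist (p :: (L ++ [q])) = δ := by
    rw [maxJump_cons dist p i _ hheadLq, maxJump_concat dist q j L hLl, hLmax]
    have h1 : dist p i ≤ δ := le_of_lt (by rwa [dist_comm])
    have h2 : dist j q ≤ δ := le_of_lt hjq
    rw [max_eq_left h2, max_eq_right h1]
  have hδmem : δ ∈ Vpq := ⟨p :: (L ++ [q]), hpath1, hmax1⟩
  have hle : MMJ dist Ω p q ≤ δ := csInf_le hfinpq.bddBelow hδmem
  -- lower bound
  have hheadL'j : (L' ++ [j]).head? = some p := by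
    cases L' with
    | nil => simp at hLh'
    | cons a l => simp_all
  have hpath2 : IsPathIn Ω i j (i :: (L' ++ [j])) := by
    refine ⟨rfl, ?_, ?_⟩
    · rw [List.getLast?_cons, List.getLast?_append]
      simp
    · intro x hx
      rcases List.mem_cons.mp hx with h | h
      · subst h; exact hi
      · rcases List.mem_append.mp h with h' | h'
        · exact hLmem' x h'
        · simp at h'; subst h'; exact hj
  have hmax2 : maxJump dist (i :: (L' ++ [j]))
      = max (dist i p) (max (MMJ dist Ω p q) (dist q j)) := by
    rw [maxJump_cons dist i p _ hheadL'j, maxJump_concat dist j q L' hLl', hLmax']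
  have hge : δ ≤ MMJ dist Ω p q := by
    by_contra hlt
    push_neg at hlt
    have h2 : dist q j < δ := by rwa [dist_comm]
    have : MMJ dist Ω i j ≤ maxJump dist (i :: (L' ++ [j])) :=
      csInf_le hfinij.bddBelow ⟨_, hpath2, rfl⟩
    rw [hij, hmax2] at this
    have : δ < δ := lt_of_le_of_lt this (by
      apply max_lt hip (max_lt hlt h2))
    exact lt_irrefl δ this
  exact le_antisymm hle hge
end

section
/- Recursive extension formula (Theorem 2): let Ω_{[1,n+1]} be the first n+1 points of Ω and r ∈ {1,…,n}. Then MMJ(Ω_{n+1}, Ω_r | Ω_{[1,n+1]}) = min over t ∈ {1,…,n} of max( d(Ω_{n+1}, Ω_t), MMJ(Ω_t, Ω_r | Ω_{[1,n]}) ). -/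
/-!
Prepending the new point `p` to a path inside the old set gives the upper bound. Conversely,
cutting a path from `p` at its last visit to `p` leaves a jump from `p` to an old point `t`
followed by a path inside the old set, whose maximal jump is at least `MMJ` there.
-/

section

variable {α : Type*}

theorem maxJump_cons_of_head? {d : α → α → ℝ} {x y : α} {L : List α} (h : L.head? = some y) :
    maxJump d (x :: L) = max (d x y) (maxJump d L) := by
  obtain ⟨M, rfl⟩ : ∃ M, L = y :: M := List.head?_eq_some_iff.mp h
  rfl

theorem maxJump_nonneg [PseudoMetricSpace α] : ∀ L : List α, 0 ≤ maxJump dist L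
  | [] | [_] => le_rfl
  | _ :: _ :: _ => le_max_of_le_left dist_nonneg

theorem IsPathIn.cons {S : Set α} {x y j : α} {L : List α} (hL : IsPathIn S y j L) (hx : x ∈ S) :
    IsPathIn S x j (x :: L) := by
  obtain ⟨hhead, hlast, hmem⟩ := hL
  obtain ⟨M, rfl⟩ : ∃ M, L = y :: M := List.head?_eq_some_iff.mp hhead
  refine ⟨rfl, ?_, List.forall_mem_cons.mpr ⟨hx, hmem⟩⟩
  rwa [List.getLast?_cons_cons]

theorem IsPathIn.tail {S : Set α} {x y j : α} {L : List α} (hL : IsPathIn S x j (x :: y :: L)) :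
    IsPathIn S y j (y :: L) :=
  ⟨rfl, by simpa only [List.getLast?_cons_cons] using hL.2.1,
    fun z hz => hL.2.2 z (List.mem_cons_of_mem x hz)⟩

theorem IsPathIn.mono {S T : Set α} {i j : α} {L : List α} (hL : IsPathIn S i j L) (hST : S ⊆ T) :
    IsPathIn T i j L :=
  ⟨hL.1, hL.2.1, fun z hz => hST (hL.2.2 z hz)⟩

theorem isPathIn_pair {S : Set α} {x y : α} (hx : x ∈ S) (hy : y ∈ S) : IsPathIn S x y [x, y] :=
  ⟨rfl, rfl, by simp [hx, hy]⟩

variable [PseudoMetricSpace α]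

theorem mmj_le_maxJump {S : Set α} {i j : α} {L : List α} (h : IsPathIn S i j L) :
    MMJ dist S i j ≤ maxJump dist L :=
  csInf_le ⟨0, fun _ ⟨L, _, hL⟩ => hL ▸ maxJump_nonneg L⟩ ⟨L, h, rfl⟩

theorem mmj_self_nonpos {S : Set α} {j : α} (hj : j ∈ S) : MMJ dist S j j ≤ 0 :=
  mmj_le_maxJump (show IsPathIn S j j [j] from ⟨rfl, rfl, by simpa using hj⟩)

theorem le_mmj {S : Set α} {i j : α} (hi : i ∈ S) (hj : j ∈ S) {m : ℝ}
    (h : ∀ L, IsPathIn S i j L → m ≤ maxJump dist L) : m ≤ MMJ dist S i j :=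
  le_csInf ⟨_, _, isPathIn_pair hi hj, rfl⟩ fun _ ⟨L, hL, hm⟩ => hm ▸ h L hL

theorem exists_isPathIn_maxJump_lt {S : Set α} {i j : α} (hi : i ∈ S) (hj : j ∈ S) {m : ℝ}
    (h : MMJ dist S i j < m) : ∃ L, IsPathIn S i j L ∧ maxJump dist L < m := by
  obtain ⟨_, ⟨L, hL, rfl⟩, hlt⟩ :=
    exists_lt_of_csInf_lt (s := {m : ℝ | ∃ L, IsPathIn S i j L ∧ maxJump dist L = m})
      ⟨_, _, isPathIn_pair hi hj, rfl⟩ h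
  exact ⟨L, hL, hlt⟩

theorem mmj_le_max_dist_mmj {S T : Set α} (hST : S ⊆ T) {x y j : α} (hx : x ∈ T) (hy : y ∈ S)
    (hj : j ∈ S) : MMJ dist T x j ≤ max (dist x y) (MMJ dist S y j) := by
  by_contra! hlt
  obtain ⟨L, hL, hLlt⟩ :=
    exists_isPathIn_maxJump_lt hy hj ((le_max_right _ _).trans_lt hlt)
  have := mmj_le_maxJump ((hL.mono hST).cons hx)
  rw [maxJump_cons_of_head? hL.1] at this
  exact this.not_gt (max_lt ((le_max_left _ _).trans_lt hlt) hLlt)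

/-- Invariant of the last-visit argument, read from the end of the path: prepending a point of `S`
preserves the first alternative, prepending `p` turns it into the second. -/
theorem mmj_le_or_exists_of_isPathIn_insert {S : Set α} {p j : α} (hj : j ∈ S) :
    ∀ {x : α} {L : List α}, IsPathIn (insert p S) x j L →
      (x ∈ S ∧ MMJ dist S x j ≤ maxJump dist L) ∨
        ∃ t ∈ S, max (dist p t) (MMJ dist S t j) ≤ maxJump dist L
  | _, [], hL => absurd hL.1 (by simp)
  | x, [y], hL => by
    obtain rfl : y = x := by simpa using hL.1
    obtain rfl : y = j := by simpa using hL.2.1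
    exact Or.inl ⟨hj, mmj_self_nonpos hj⟩
  | x, y :: z :: M, hL => by
    obtain rfl : y = x := by simpa using hL.1
    rw [maxJump_cons_of_head? rfl]
    rcases mmj_le_or_exists_of_isPathIn_insert hj hL.tail with ⟨hz, hzM⟩ | ⟨t, ht, htM⟩
    · rcases hL.2.2 y List.mem_cons_self with rfl | hy
      · exact Or.inr ⟨z, hz, max_le_max le_rfl hzM⟩
      · exact Or.inl ⟨hy, (mmj_le_max_dist_mmj subset_rfl hy hz hj).trans
          (max_le_max le_rfl hzM)⟩
    · exact Or.inr ⟨t, ht, htM.trans (le_max_right _ _)⟩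

theorem exists_max_dist_mmj_le_maxJump {S : Set α} {p j : α} (hj : j ∈ S) {L : List α}
    (hL : IsPathIn (insert p S) p j L) :
    ∃ t ∈ S, max (dist p t) (MMJ dist S t j) ≤ maxJump dist L := by
  rcases mmj_le_or_exists_of_isPathIn_insert hj hL with ⟨hp, hpL⟩ | h
  · exact ⟨p, hp, by simpa using ⟨maxJump_nonneg L, hpL⟩⟩
  · exact h

theorem mmj_insert_image_eq_inf' {ι : Type*} (f : ι → α) (s : Finset ι) (hs : s.Nonempty)
    (p : α) {j : α} (hj : j ∈ f '' s) :
    MMJ dist (insert p (f '' s)) p j =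
      s.inf' hs (fun t => max (dist p (f t)) (MMJ dist (f '' s) (f t) j)) := by
  apply le_antisymm
  · exact Finset.le_inf' hs _ fun t ht =>
      mmj_le_max_dist_mmj (Set.subset_insert p _) (Set.mem_insert p _) ⟨t, ht, rfl⟩ hj
  · refine le_mmj (Set.mem_insert p _) (Set.mem_insert_of_mem p hj) fun L hL => ?_
    obtain ⟨_, ⟨t, ht, rfl⟩, htL⟩ := exists_max_dist_mmj_le_maxJump hj hL
    exact (Finset.inf'_le _ ht).trans htL

end

theorem mmj_recursion_general {α : Type*} [MetricSpace α] (Ω : ℕ → α)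
    (n : ℕ) (hn : 1 ≤ n)
    (r : ℕ) (hr : r ∈ Finset.Icc 1 n) :
    MMJ dist (Ω '' Set.Icc 1 (n + 1)) (Ω (n + 1)) (Ω r) =
      (Finset.Icc 1 n).inf' (Finset.nonempty_Icc.mpr hn)
        (fun t => max (dist (Ω (n + 1)) (Ω t))
          (MMJ dist (Ω '' Set.Icc 1 n) (Ω t) (Ω r))) := by
  rw [← Set.insert_Icc_right_eq_Icc_add_one (by omega), Set.image_insert_eq, ← Finset.coe_Icc]
  exact mmj_insert_image_eq_inf' Ω _ _ _ ⟨r, hr, rfl⟩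

theorem mmj_recursion {α : Type*} [MetricSpace α] (Ω : ℕ → α)
    (n : ℕ) (hn : 1 ≤ n) (hinj : Set.InjOn Ω (Set.Icc 1 (n + 1)))
    (r : ℕ) (hr : r ∈ Finset.Icc 1 n) :
    MMJ dist (Ω '' Set.Icc 1 (n + 1)) (Ω (n + 1)) (Ω r) =
      (Finset.Icc 1 n).inf' (Finset.nonempty_Icc.mpr hn)
        (fun t => max (dist (Ω (n + 1)) (Ω t))
          (MMJ dist (Ω '' Set.Icc 1 n) (Ω t) (Ω r))) :=
  mmj_recursion_general Ω n hn r hr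
end

section
/- Minimum spanning tree realizes MMJ distances: in a finite weighted connected undirected graph, for any minimum spanning tree T and any two vertices v, w, the maximum edge weight on the unique path from v to w in T equals the minimax path distance between v and w in the whole graph (the minimum over all v–w paths of the maximum edge weight on the path). -/
open scoped Classical in
/-- Total edge weight of a graph on a finite vertex type. -/
noncomputable def treeWeight {V : Type*} [Fintype V] (w : Sym2 V → ℝ) (H : SimpleGraph V) : ℝ :=
  ∑ e ∈ H.edgeFinset, w e

/-!
Let `e` be an edge of the tree path from `v` to `u`. Deleting `e` from `T` separates `v` from `u`,
so every walk `q` from `v` to `u` in `G` has an edge `cd` joining the two sides. Exchanging `e`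
for `cd` gives another spanning tree, so minimality of `T` forces `w e ≤ w cd`. Hence the
maximum weight on the tree path is at most the maximum weight on `q`, and the tree path itself is
one of the walks.
-/

namespace SimpleGraph

variable {V : Type*} {G T : SimpleGraph V}

lemma Preconnected.reachable_deleteEdges_or (hG : G.Preconnected) {a b : V} (hab : a ≠ b)
    (x : V) :
    (G.deleteEdges {s(a, b)}).Reachable x a ∨ (G.deleteEdges {s(a, b)}).Reachable x b := by
  classical
  obtain ⟨P, hP⟩ := hG.exists_isPath x a
  by_cases heP : s(a, b) ∈ P.edges
  · have hbP := P.snd_mem_support_of_mem_edges heP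
    have haP₁ := Walk.endpoint_notMem_support_takeUntil hP hbP hab
    have heP₁ : s(a, b) ∉ (P.takeUntil b hbP).edges :=
      fun h ↦ haP₁ <| Walk.fst_mem_support_of_mem_edges _ h
    exact Or.inr ⟨(P.takeUntil b hbP).toDeleteEdges {s(a, b)} (by grind)⟩
  · exact Or.inl ⟨P.toDeleteEdges {s(a, b)} (by grind)⟩

lemma IsTree.deleteEdges_sup_edge (hT : T.IsTree) {a b c d : V} (hab : a ≠ b)
    (hcd : ¬ (T.deleteEdges {s(a, b)}).Reachable c d) :
    (T.deleteEdges {s(a, b)} ⊔ edge c d).IsTree := by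
  set H := T.deleteEdges {s(a, b)}
  have hside := hT.connected.preconnected.reachable_deleteEdges_or hab
  have hne : c ≠ d := fun h ↦ hcd (h ▸ .rfl)
  have hcd' : (H ⊔ edge c d).Reachable c d := Adj.reachable (by simp [edge_adj, hne])
  have hab' : (H ⊔ edge c d).Reachable a b := by
    rcases hside c with hca | hcb <;> rcases hside d with hda | hdb
    · exact absurd (hca.trans hda.symm) hcd
    · exact (hca.mono le_sup_left).symm.trans (hcd'.trans (hdb.mono le_sup_left))
    · exact (hda.mono le_sup_left).symm.trans (hcd'.symm.trans (hcb.mono le_sup_left))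
    · exact absurd (hcb.trans hdb.symm) hcd
  have hreach : ∀ x, (H ⊔ edge c d).Reachable x a := fun x ↦ by
    rcases hside x with hxa | hxb
    · exact hxa.mono le_sup_left
    · exact (hxb.mono le_sup_left).trans hab'.symm
  have : Nonempty V := ⟨a⟩
  exact ⟨.mk fun x y ↦ (hreach x).trans (hreach y).symm,
    (hT.isAcyclic.anti (deleteEdges_le _)).sup_edge_of_not_reachable hcd⟩

lemma IsAcyclic.not_reachable_deleteEdges_of_mem_edges (hT : T.IsAcyclic) {v u : V}
    {p : T.Walk v u} (hp : p.IsPath) {e : Sym2 V} (he : e ∈ p.edges) :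
    ¬ (T.deleteEdges {e}).Reachable v u := by
  intro hr
  obtain ⟨r, hr⟩ := hr.exists_isPath
  have hpr : p = r.mapLe (deleteEdges_le _) :=
    congrArg Subtype.val ((hT.subsingleton_path v u).elim ⟨p, hp⟩ ⟨_, hr.mapLe _⟩)
  rw [hpr, Walk.edges_mapLe_eq_edges] at he
  simpa [edgeSet_deleteEdges] using r.edges_subset_edgeSet he

lemma Walk.exists_mem_edges_not_reachable {H : SimpleGraph V} {v u : V} (q : G.Walk v u)
    (hvu : ¬ H.Reachable v u) : ∃ c d, s(c, d) ∈ q.edges ∧ ¬ H.Reachable c d := by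
  obtain ⟨dd, hdq, hc, hd⟩ := q.exists_boundary_dart {x | H.Reachable v x} .rfl hvu
  exact ⟨dd.fst, dd.snd, List.mem_map_of_mem hdq, fun h ↦ hd (Reachable.trans hc h)⟩

end SimpleGraph

open SimpleGraph

section treeWeight

variable {V : Type*} [Fintype V] (w : Sym2 V → ℝ)

lemma treeWeight_sup_edge {H : SimpleGraph V} {c d : V} (hcd : c ≠ d) (hH : ¬ H.Adj c d) :
    treeWeight w (H ⊔ edge c d) = treeWeight w H + w s(c, d) := by
  classical
  rw [treeWeight, treeWeight, add_comm, ← Finset.sum_cons (f := w) (by simpa using hH)]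
  congr 1
  ext x
  simp [edgeSet_edge_of_ne hcd, or_comm]

lemma treeWeight_deleteEdges {T : SimpleGraph V} {e : Sym2 V} (he : e ∈ T.edgeSet) :
    treeWeight w (T.deleteEdges {e}) = treeWeight w T - w e := by
  classical
  rw [treeWeight, treeWeight, eq_sub_iff_add_eq,
    ← Finset.sum_erase_add _ _ (mem_edgeFinset.2 he)]
  congr 2
  ext x
  simp [and_comm]

def IsMinSpanningTree (G T : SimpleGraph V) : Prop :=
  T ≤ G ∧ T.IsTree ∧ ∀ T' : SimpleGraph V, T' ≤ G → T'.IsTree → treeWeight w T ≤ treeWeight w T'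

variable {w}

/-- The cut property of minimum spanning trees. -/
lemma IsMinSpanningTree.weight_le {G T : SimpleGraph V} (hT : IsMinSpanningTree w G T)
    {e : Sym2 V} (he : e ∈ T.edgeSet) {c d : V} (hcd : G.Adj c d)
    (hsep : ¬ (T.deleteEdges {e}).Reachable c d) : w e ≤ w s(c, d) := by
  obtain ⟨hTG, hTree, hmin⟩ := hT
  induction e using Sym2.ind with
  | _ a b =>
  have hle : T.deleteEdges {s(a, b)} ⊔ edge c d ≤ G :=
    sup_le ((deleteEdges_le _).trans hTG) (G.edge_le_iff.2 (.inr hcd))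
  have hswap := hmin _ hle (hTree.deleteEdges_sup_edge (T.ne_of_adj he) hsep)
  rw [treeWeight_sup_edge w hcd.ne fun h ↦ hsep h.reachable, treeWeight_deleteEdges w he]
    at hswap
  linarith

end treeWeight

theorem mst_realizes_minimax_general {V : Type*} [Fintype V] (G : SimpleGraph V) (w : Sym2 V → ℝ)
    (T : SimpleGraph V) (hTG : T ≤ G) (hT : T.IsTree)
    (hmin : ∀ T' : SimpleGraph V, T' ≤ G → T'.IsTree → treeWeight w T ≤ treeWeight w T')
    (v u : V) (p : T.Walk v u) (hp : p.IsPath) :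
    IsLeast {m : WithBot ℝ | ∃ q : G.Walk v u, (q.edges.map w).maximum = m}
      ((p.edges.map w).maximum) := by
  refine ⟨⟨p.mapLe hTG, by rw [Walk.edges_mapLe_eq_edges]⟩, ?_⟩
  rintro m ⟨q, rfl⟩
  refine List.maximum_le_of_forall_le fun x hx ↦ ?_
  obtain ⟨e, hep, rfl⟩ := List.mem_map.1 hx
  obtain ⟨c, d, hcdq, hsep⟩ :=
    q.exists_mem_edges_not_reachable (hT.isAcyclic.not_reachable_deleteEdges_of_mem_edges hp hep)
  have hwe : w e ≤ w s(c, d) :=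
    IsMinSpanningTree.weight_le ⟨hTG, hT, hmin⟩ (p.edges_subset_edgeSet hep)
      (q.adj_of_mem_edges hcdq) hsep
  calc (w e : WithBot ℝ) ≤ w s(c, d) := WithBot.coe_le_coe.2 hwe
    _ ≤ _ := List.le_maximum_of_mem' (List.mem_map_of_mem hcdq)

/-- A minimum spanning tree realizes minimax (Min-Max-Jump) path distances:
the maximum edge weight on the (unique) path in the MST between two vertices is the
least element of the set of max-edge-weights over all walks between them in `G`. -/
theorem mst_realizes_minimax {V : Type*} [Fintype V] (G : SimpleGraph V) (w : Sym2 V → ℝ)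
    (hG : G.Connected) (T : SimpleGraph V) (hTG : T ≤ G) (hT : T.IsTree)
    (hmin : ∀ T' : SimpleGraph V, T' ≤ G → T'.IsTree → treeWeight w T ≤ treeWeight w T')
    (v u : V) (p : T.Walk v u) (hp : p.IsPath) :
    IsLeast {m : WithBot ℝ | ∃ q : G.Walk v u, (q.edges.map w).maximum = m}
      ((p.edges.map w).maximum) :=
  mst_realizes_minimax_general G w T hTG hT hmin v u p hp
end

section
/- Correctness of the MST edge-removal copy step: let T be a minimum spanning tree of the complete weighted graph on Ω, let e be an edge of maximum weight in T, and let T_1, T_2 be the two components of T − e. Then for every p ∈ T_1 and q ∈ T_2, MMJ(p,q|Ω) equals the weight of e. -/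
/-- The symmetric weight function induced by the metric. -/
noncomputable def wdist (α : Type*) [MetricSpace α] : Sym2 α → ℝ :=
  Sym2.lift ⟨fun a b => dist a b, fun a b => dist_comm a b⟩

open SimpleGraph

lemma treeWeight_def {V : Type*} [Fintype V] (w : Sym2 V → ℝ) (H : SimpleGraph V)
    [Fintype H.edgeSet] : treeWeight w H = ∑ e ∈ H.edgeFinset, w e := by
  unfold treeWeight
  refine Finset.sum_congr ?_ (fun _ _ => rfl)
  ext f
  simp [mem_edgeFinset]

lemma reach_side {α : Type*} {T : SimpleGraph α} (v : α) {x u : α} (h : T.Reachable x u) :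
    (T.deleteEdges {s(u,v)}).Reachable x u ∨ (T.deleteEdges {s(u,v)}).Reachable x v := by
  obtain ⟨W⟩ := h
  induction W with
  | nil => exact Or.inl (Reachable.refl _)
  | @cons x z u h w ih =>
    by_cases he : s(x, z) = s(u, v)
    · rw [Sym2.eq_iff] at he
      rcases he with ⟨rfl, rfl⟩ | ⟨rfl, rfl⟩
      · exact Or.inl (Reachable.refl _)
      · exact Or.inr (Reachable.refl _)
    · have hadj : (T.deleteEdges {s(u,v)}).Adj x z :=
        deleteEdges_adj.mpr ⟨h, by simpa using he⟩
      rcases ih with h1 | h1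
      · exact Or.inl (hadj.reachable.trans h1)
      · exact Or.inr (hadj.reachable.trans h1)

lemma sup_edge_reach {α : Type*} {G : SimpleGraph α} {a b x y : α}
    (h : (G ⊔ fromEdgeSet {s(a,b)}).Reachable x y) :
    G.Reachable x y ∨ (G.Reachable x a ∧ G.Reachable b y) ∨
      (G.Reachable x b ∧ G.Reachable a y) := by
  obtain ⟨W⟩ := h
  induction W with
  | nil => exact Or.inl (Reachable.refl _)
  | @cons x z y h w ih =>
    rcases (sup_adj _ _ _ _).mp h with h | h
    · rcases ih with h1 | ⟨h1, h2⟩ | ⟨h1, h2⟩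
      · exact Or.inl (h.reachable.trans h1)
      · exact Or.inr (Or.inl ⟨h.reachable.trans h1, h2⟩)
      · exact Or.inr (Or.inr ⟨h.reachable.trans h1, h2⟩)
    · obtain ⟨hm, hne⟩ := (fromEdgeSet_adj _).mp h
      rw [Set.mem_singleton_iff, Sym2.eq_iff] at hm
      rcases hm with ⟨rfl, rfl⟩ | ⟨rfl, rfl⟩
      · rcases ih with h1 | ⟨h1, h2⟩ | ⟨h1, h2⟩
        · exact Or.inr (Or.inl ⟨Reachable.refl _, h1⟩)
        · exact Or.inl (h1.symm.trans h2)
        · exact Or.inl h2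
      · rcases ih with h1 | ⟨h1, h2⟩ | ⟨h1, h2⟩
        · exact Or.inr (Or.inr ⟨Reachable.refl _, h1⟩)
        · exact Or.inl h2
        · exact Or.inl (h1.symm.trans h2)

lemma le_maxJump_of_cut {α : Type*} [MetricSpace α] {P : α → Prop} {c : ℝ}
    (hc : ∀ x y, P x → ¬ P y → c ≤ dist x y) :
    ∀ (L : List α) (i j : α), L.head? = some i → L.getLast? = some j →
      P i → ¬ P j → c ≤ maxJump dist L := by
  intro L
  induction L with
  | nil => intro i j h; simp at h
  | cons a l ih =>
    intro i j hh hl hPi hPj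
    rw [List.head?_cons, Option.some_inj] at hh
    subst hh
    cases l with
    | nil =>
      simp only [List.getLast?_singleton, Option.some_inj] at hl
      subst hl; exact absurd hPi hPj
    | cons b l' =>
      simp only [maxJump]
      by_cases hPb : P b
      · refine le_max_of_le_right (ih b j rfl ?_ hPb hPj)
        rw [← hl, List.getLast?_cons_cons]
      · exact le_max_of_le_left (hc a b hPi hPb)

lemma maxJump_support_le {α : Type*} [MetricSpace α] {T : SimpleGraph α} {c : ℝ} (h0 : 0 ≤ c)
    (hmax : ∀ x y, T.Adj x y → dist x y ≤ c) :
    ∀ {x y : α} (W : T.Walk x y), maxJump dist W.support ≤ c := by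
  intro x y W
  induction W with
  | nil => simpa [maxJump] using h0
  | @cons x z y h w ih =>
    rw [Walk.support_cons, w.support_eq_cons]
    simp only [maxJump]
    refine max_le (hmax _ _ h) ?_
    rw [← w.support_eq_cons]; exact ih

lemma walk_support_getLast? {α : Type*} {T : SimpleGraph α} {x y : α} (W : T.Walk x y) :
    W.support.getLast? = some y := by
  rw [List.getLast?_eq_getLast (l := W.support) (by simp), W.getLast_support]


/-- Correctness of the MST edge-removal copy step: removing a maximum-weight edge `e`
from a minimum spanning tree `T` of the complete graph on `Ω` splits it into two
components; the MMJ distance between any two points in different components is `w e`. -/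
theorem mmj_mst_copy {α : Type*} [Fintype α] [MetricSpace α]
    (T : SimpleGraph α) (hT : T.IsTree)
    (hmin : ∀ T' : SimpleGraph α, T'.IsTree → treeWeight (wdist α) T ≤ treeWeight (wdist α) T')
    (e : Sym2 α) (he : e ∈ T.edgeSet)
    (hmax : ∀ e' ∈ T.edgeSet, wdist α e' ≤ wdist α e)
    (p q : α) (hpq : ¬ (T.deleteEdges {e}).Reachable p q) :
    MMJ dist (Set.univ : Set α) p q = wdist α e := by
  classical
  obtain ⟨u, v, rfl⟩ : ∃ u v : α, e = s(u, v) := by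
    induction e using Sym2.inductionOn with
    | _ u v => exact ⟨u, v, rfl⟩
  set T' := T.deleteEdges {s(u, v)} with hT'def
  have hwuv : wdist α s(u, v) = dist u v := rfl
  have hTadj : T.Adj u v := (mem_edgeSet _).mp he
  have huv : ¬ T'.Reachable u v :=
    (isBridge_iff.mp (isAcyclic_iff_forall_adj_isBridge.mp hT.2 hTadj))
  -- the cut lemma via MST exchange
  have cut : ∀ a b : α, T'.Reachable a u → T'.Reachable b v →
      wdist α s(u, v) ≤ dist a b := by
    intro a b hau hbv
    by_contra hlt
    push_neg at hlt
    have hab_ne : a ≠ b := by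
      rintro rfl; exact huv (hau.symm.trans hbv)
    have hnab : ¬ T'.Reachable a b := fun h => huv (hau.symm.trans (h.trans hbv))
    have habe : s(a, b) ∉ T.edgeSet := by
      intro hmem
      by_cases hd : s(a, b) = s(u, v)
      · rw [hwuv] at hlt
        rw [Sym2.eq_iff] at hd
        rcases hd with ⟨rfl, rfl⟩ | ⟨rfl, rfl⟩
        · exact absurd hlt (lt_irrefl _)
        · rw [_root_.dist_comm a b] at hlt; exact absurd hlt (lt_irrefl _)
      · have : T'.Adj a b := deleteEdges_adj.mpr ⟨(mem_edgeSet _).mp hmem, by simpa using hd⟩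
        exact hnab this.reachable
    set T'' := T' ⊔ fromEdgeSet {s(a, b)} with hT''def
    have hle : T' ≤ T'' := le_sup_left
    have habadj : T''.Adj a b :=
      (sup_adj _ _ _ _).mpr (Or.inr ((fromEdgeSet_adj _).mpr ⟨rfl, hab_ne⟩))
    -- connectivity
    have hreach_u : ∀ z : α, T''.Reachable z u := by
      have hvu : T''.Reachable v u :=
        ((hbv.mono hle).symm.trans habadj.symm.reachable).trans (hau.mono hle)
      intro z
      rcases reach_side v (hT.1.preconnected z u) with h | h
      · exact h.mono hle
      · exact (h.mono hle).trans hvu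
    have hT''conn : T''.Connected := by
      rw [connected_iff]
      exact ⟨fun x y => (hreach_u x).trans (hreach_u y).symm, ⟨p⟩⟩
    -- acyclicity
    have hT''ac : T''.IsAcyclic := by
      rw [isAcyclic_iff_forall_adj_isBridge]
      intro x y hxy
      rw [isBridge_iff]
      intro hreach
      rcases (sup_adj _ _ _ _).mp hxy with hxy' | hxy'
      · -- old edge of T'
        have hfT : s(x, y) ∈ T.edgeSet := (mem_edgeSet _).mpr (deleteEdges_adj.mp hxy').1
        have hxyne : x ≠ y := ((mem_edgeSet _).mp hfT).ne
        have hmono : T'' \ fromEdgeSet {s(x, y)} ≤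
            (T.deleteEdges {s(u, v), s(x, y)}) ⊔ fromEdgeSet {s(a, b)} := by
          rw [← edgeSet_subset_edgeSet]
          intro f hf
          simp only [edgeSet_sdiff, edgeSet_sup, hT''def, hT'def, edgeSet_deleteEdges,
            edgeSet_fromEdgeSet, Set.mem_diff, Set.mem_union, Set.mem_singleton_iff,
            Set.mem_insert_iff, Set.mem_setOf_eq] at hf ⊢
          obtain ⟨hf1, hf2⟩ := hf
          rcases hf1 with hf1 | hf1
          · left
            refine ⟨hf1.1, ?_⟩
            rintro (rfl | rfl)
            · exact hf1.2 rfl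
            · exact hf2 ⟨rfl, by simp [Sym2.mk_isDiag_iff, hxyne]⟩
          · right; exact hf1
        rcases sup_edge_reach (hreach.mono hmono) with h1 | ⟨h1, h2⟩ | ⟨h1, h2⟩
        · have hbr : ¬ (T.deleteEdges {s(x, y)}).Reachable x y :=
            (isBridge_iff.mp (isAcyclic_iff_forall_adj_isBridge.mp hT.2
              ((mem_edgeSet _).mp hfT)))
          exact hbr (h1.mono (deleteEdges_anti (fun f hf => Or.inr hf)))
        · have hle2 : T.deleteEdges {s(u, v), s(x, y)} ≤ T' :=
            deleteEdges_anti (fun f hf => Or.inl hf)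
          exact hnab ((h1.mono hle2).symm.trans
            (hxy'.reachable.trans (h2.mono hle2).symm))
        · have hle2 : T.deleteEdges {s(u, v), s(x, y)} ≤ T' :=
            deleteEdges_anti (fun f hf => Or.inl hf)
          exact hnab ((h2.mono hle2).trans
            (hxy'.reachable.symm.trans (h1.mono hle2)))
      · -- the new edge
        obtain ⟨hm, hne⟩ := (fromEdgeSet_adj _).mp hxy'
        rw [Set.mem_singleton_iff] at hm
        rw [hm] at hreach
        have hmono : T'' \ fromEdgeSet {s(a, b)} ≤ T' := by
          rw [← edgeSet_subset_edgeSet]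
          intro f hf
          simp only [edgeSet_sdiff, edgeSet_sup, hT''def, edgeSet_fromEdgeSet,
            Set.mem_diff, Set.mem_union, Set.mem_singleton_iff, Set.mem_setOf_eq] at hf
          tauto
        have hxyT' : T'.Reachable x y := hreach.mono hmono
        rw [Sym2.eq_iff] at hm
        rcases hm with ⟨rfl, rfl⟩ | ⟨rfl, rfl⟩
        · exact hnab hxyT'
        · exact hnab hxyT'.symm
    have hT''tree : T''.IsTree := ⟨hT''conn, hT''ac⟩
    have hw := hmin T'' hT''tree
    rw [treeWeight_def, treeWeight_def] at hw
    have hfin : T''.edgeFinset = insert s(a, b) (T.edgeFinset.erase s(u, v)) := by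
      ext f
      simp only [mem_edgeFinset, Finset.mem_insert, Finset.mem_erase, hT''def, hT'def,
        edgeSet_sup, edgeSet_deleteEdges, edgeSet_fromEdgeSet, Set.mem_union, Set.mem_diff,
        Set.mem_singleton_iff, Set.mem_setOf_eq]
      constructor
      · rintro (⟨hf1, hf2⟩ | ⟨rfl, -⟩)
        · exact Or.inr ⟨hf2, hf1⟩
        · exact Or.inl rfl
      · rintro (rfl | ⟨hf2, hf1⟩)
        · exact Or.inr ⟨rfl, by simp [Sym2.mk_isDiag_iff, hab_ne]⟩
        · exact Or.inl ⟨hf1, hf2⟩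
    have hnotmem : s(a, b) ∉ T.edgeFinset.erase s(u, v) := fun h =>
      habe (mem_edgeFinset.mp (Finset.mem_of_mem_erase h))
    have hsum : ∑ f ∈ T''.edgeFinset, wdist α f
        = dist a b + ∑ f ∈ T.edgeFinset.erase s(u, v), wdist α f := by
      rw [hfin, Finset.sum_insert hnotmem]; rfl
    have hsum2 : ∑ f ∈ T.edgeFinset.erase s(u, v), wdist α f + wdist α s(u, v)
        = ∑ f ∈ T.edgeFinset, wdist α f :=
      Finset.sum_erase_add _ _ (mem_edgeFinset.mpr he)
    rw [hsum] at hw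
    linarith
  -- which side is p on?
  have hside := reach_side v (hT.1.preconnected p u)
  obtain ⟨W⟩ := hT.1.preconnected p q
  have hm0 : maxJump dist W.support ∈
      {m : ℝ | ∃ L : List α, IsPathIn (Set.univ : Set α) p q L ∧ maxJump dist L = m} :=
    ⟨W.support, ⟨by rw [W.support_eq_cons]; rfl, walk_support_getLast? W,
      fun _ _ => trivial⟩, rfl⟩
  have hm0le : maxJump dist W.support ≤ wdist α s(u, v) :=
    maxJump_support_le (hwuv ▸ dist_nonneg)
      (fun x y hxy => hmax s(x, y) ((mem_edgeSet _).mpr hxy)) W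
  have hlb : ∀ m ∈ {m : ℝ | ∃ L : List α, IsPathIn (Set.univ : Set α) p q L ∧
      maxJump dist L = m}, wdist α s(u, v) ≤ m := by
    rintro m ⟨L, ⟨hh, hl, -⟩, rfl⟩
    refine le_maxJump_of_cut (P := fun x => T'.Reachable p x) ?_ L p q hh hl
      (Reachable.refl p) hpq
    intro x y hx hy
    rcases hside with hpu | hpv
    · have hxu : T'.Reachable x u := hx.symm.trans hpu
      have hyv : T'.Reachable y v := by
        rcases reach_side v (hT.1.preconnected y u) with h | h
        · exact absurd (hpu.trans h.symm) hy
        · exact h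
      exact cut x y hxu hyv
    · have hxv : T'.Reachable x v := hx.symm.trans hpv
      have hyu : T'.Reachable y u := by
        rcases reach_side v (hT.1.preconnected y u) with h | h
        · exact h
        · exact absurd (hpv.trans h.symm) hy
      have h := cut y x hyu hxv
      rwa [_root_.dist_comm y x] at h
  refine le_antisymm ?_ (le_csInf ⟨_, hm0⟩ hlb)
  exact le_trans (csInf_le ⟨wdist α s(u, v), hlb⟩ hm0) hm0le
end
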